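/- If U is a strict ω^ω-ultrafilter, then for every k ∈ ω there is a <_∞-chain of length k below U. -/

import Mathlib

open Ordinal Set

/-- The order type of a set of ordinals: the unique ordinal order-isomorphic to it. -/
noncomputable def otype (S : Set Ordinal.{0}) : Ordinal.{1} :=
  @Ordinal.type S (Subrel (· < ·) (· ∈ S)) (by exact inferInstance)

/-- `f` is finite-to-one on `X`. -/
def FinToOneOn (f : ℕ → ℕ) (X : Set ℕ) : Prop := ∀ n : ℕ, (X ∩ f ⁻¹' {n}).Finite

/-- `f` is constant on `X`. -/
def ConstOn (f : ℕ → ℕ) (X : Set ℕ) : Prop := ∃ c : ℕ, ∀ x ∈ X, f x = c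

/-- `V >_∞ U`: some `f` pushes `V` forward to `U` but `f` is neither finite-to-one
nor constant on any member of `V`. -/
def InfGT (V U : Ultrafilter ℕ) : Prop :=
  ∃ f : ℕ → ℕ, Ultrafilter.map f V = U ∧ ∀ X ∈ V, ¬ FinToOneOn f X ∧ ¬ ConstOn f X

/-- There is a `<_∞`-chain of length `k` below `U`: `k` ultrafilters descending under
`>_∞` starting from `U`. -/
def ChainBelow (U : Ultrafilter ℕ) (k : ℕ) : Prop :=
  ∃ V : ℕ → Ultrafilter ℕ, (V 0 = U ∨ InfGT U (V 0)) ∧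
    ∀ i : ℕ, i + 1 < k → InfGT (V i) (V (i + 1))

/-- `U` is a strict `α`-ultrafilter: `α` is least such that every `h : ω → ω₁` admits
`X ∈ U` with the order type of `h '' X` strictly less than `α`. -/
def IsStrictAlphaUF (U : Ultrafilter ℕ) (α : Ordinal.{1}) : Prop :=
  IsLeast {a : Ordinal.{1} |
    ∀ h : ℕ → Ordinal.{0}, (∀ n, h n < ω₁) → ∃ X ∈ U, otype (h '' X) < a} α


-- ### auxiliary lemmas ###

lemma otype_le_of_map (S T : Set Ordinal.{0}) (φ : Ordinal.{0} → Ordinal.{0})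
    (hmem : ∀ a ∈ S, φ a ∈ T)
    (hmono : ∀ a ∈ S, ∀ b ∈ S, a < b → φ a < φ b) : otype S ≤ otype T := by
  unfold otype
  refine (Ordinal.type_le_iff').2 ⟨?_⟩
  have hinj : ∀ a ∈ S, ∀ b ∈ S, φ a = φ b → a = b := by
    intro a ha b hb hab
    rcases lt_trichotomy a b with h | h | h
    · exact absurd (hab ▸ hmono a ha b hb h) (lt_irrefl _)
    · exact h
    · exact absurd (hab ▸ hmono b hb a ha h) (lt_irrefl _)
  refine ⟨⟨fun a => ⟨φ a.1, hmem a.1 a.2⟩, ?_⟩, ?_⟩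
  · rintro ⟨a, ha⟩ ⟨b, hb⟩ h
    simp only [Subtype.mk.injEq] at h ⊢
    exact hinj a ha b hb h
  · rintro ⟨a, ha⟩ ⟨b, hb⟩
    constructor
    · intro h
      rcases lt_trichotomy a b with h' | h' | h'
      · exact h'
      · exact absurd (h' ▸ h : φ b < φ b) (lt_irrefl _)
      · exact absurd (h.trans (hmono b hb a ha h')) (lt_irrefl _)
    · exact fun h => hmono a ha b hb h

lemma otype_Iio (γ : Ordinal.{0}) : otype (Iio γ) = Ordinal.lift.{1} γ :=
  typein_ordinal γ

lemma otype_inter_Iio_lt {S : Set Ordinal.{0}} {a : Ordinal.{0}} (ha : a ∈ S) :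
    otype {y | y ∈ S ∧ y < a} < otype S := by
  unfold otype
  have f : PrincipalSeg (Subrel (· < ·) (· ∈ {y | y ∈ S ∧ y < a})) (Subrel (· < ·) (· ∈ S)) := by
    refine ⟨⟨⟨fun x => ⟨x.1, x.2.1⟩, ?_⟩, ?_⟩, ⟨a, ha⟩, ?_⟩
    · rintro ⟨x, hx⟩ ⟨y, hy⟩ h
      simp only [Subtype.mk.injEq] at h ⊢
      exact h
    · rintro ⟨x, hx⟩ ⟨y, hy⟩
      exact Iff.rfl
    · rintro ⟨b, hb⟩
      constructor
      · rintro ⟨⟨x, hx⟩, hxb⟩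
        have : x = b := congrArg Subtype.val hxb
        subst this
        exact hx.2
      · intro h
        exact ⟨⟨b, hb, h⟩, rfl⟩
  exact f.ordinal_type_lt

/-- existence of a strictly monotone map into `Iio γ`. -/
def Emb (S : Set Ordinal.{0}) (γ : Ordinal.{0}) : Prop :=
  ∃ φ : Ordinal.{0} → Ordinal.{0},
    (∀ a ∈ S, ∀ b ∈ S, a < b → φ a < φ b) ∧ ∀ a ∈ S, φ a < γ

lemma Emb.mono {S S' : Set Ordinal.{0}} {γ γ' : Ordinal.{0}} (hS : S' ⊆ S) (hγ : γ ≤ γ')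
    (h : Emb S γ) : Emb S' γ' := by
  obtain ⟨φ, h1, h2⟩ := h
  exact ⟨φ, fun a ha b hb => h1 a (hS ha) b (hS hb),
    fun a ha => lt_of_lt_of_le (h2 a (hS ha)) hγ⟩

lemma Emb.otype_le {S : Set Ordinal.{0}} {γ : Ordinal.{0}} (h : Emb S γ) :
    otype S ≤ Ordinal.lift.{1} γ := by
  obtain ⟨φ, h1, h2⟩ := h
  rw [← otype_Iio]
  exact otype_le_of_map S (Iio γ) φ (fun a ha => h2 a ha) h1

lemma emb_block {c : Ordinal.{0}} (hc : c ≠ 0) (u : Ordinal.{0}) :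
    Emb {ξ | ξ / c = u} c := by
  refine ⟨fun ξ => ξ % c, ?_, fun a _ => Ordinal.mod_lt a hc⟩
  intro a ha b hb hab
  have ha' : c * u + a % c = a := by
    rw [show c * u = c * (a / c) by rw [ha]]; exact Ordinal.div_add_mod a c
  have hb' : c * u + b % c = b := by
    rw [show c * u = c * (b / c) by rw [hb]]; exact Ordinal.div_add_mod b c
  have : c * u + a % c < c * u + b % c := by rw [ha', hb']; exact hab
  exact (add_lt_add_iff_left _).1 this

lemma otype_image_eq (X : Set ℕ) (f g : ℕ → Ordinal.{0})
    (hfg : ∀ x ∈ X, ∀ y ∈ X, f x < f y ↔ g x < g y) :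
    otype (f '' X) = otype (g '' X) := by
  have key : ∀ (f g : ℕ → Ordinal.{0}), (∀ x ∈ X, ∀ y ∈ X, f x < f y ↔ g x < g y) →
      otype (f '' X) ≤ otype (g '' X) := by
    intro f g hfg
    classical
    set φ : Ordinal.{0} → Ordinal.{0} := fun a =>
      if h : a ∈ f '' X then g h.choose else 0 with hφ
    have hspec : ∀ a (h : a ∈ f '' X), h.choose ∈ X ∧ f h.choose = a := fun a h =>
      ⟨h.choose_spec.1, h.choose_spec.2⟩
    refine otype_le_of_map _ _ φ ?_ ?_
    · intro a ha
      rw [hφ]; simp only [dif_pos ha]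
      exact mem_image_of_mem g (hspec a ha).1
    · intro a ha b hb hab
      rw [hφ]; simp only [dif_pos ha, dif_pos hb]
      obtain ⟨hxa, hfa⟩ := hspec a ha
      obtain ⟨hxb, hfb⟩ := hspec b hb
      exact (hfg _ hxa _ hxb).1 (by rw [hfa, hfb]; exact hab)
  exact le_antisymm (key f g hfg) (key g f (fun x hx y hy => (hfg x hx y hy).symm))


noncomputable def natOf (o : Ordinal.{0}) : ℕ := Cardinal.toNat o.card

lemma natOf_cast (n : ℕ) : natOf (n : Ordinal.{0}) = n := by
  simp [natOf]

lemma cast_natOf {o : Ordinal.{0}} (h : o < ω) : (natOf o : Ordinal.{0}) = o := by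
  obtain ⟨n, rfl⟩ := Ordinal.lt_omega0.1 h
  rw [natOf_cast]

lemma Ordinal.div_div' (a : Ordinal.{0}) {b c : Ordinal.{0}} (hb : b ≠ 0) (hc : c ≠ 0) :
    a / b / c = a / (b * c) := by
  have hbc : b * c ≠ 0 := mul_ne_zero hb hc
  have key : ∀ d : Ordinal, d ≤ a / b / c ↔ d ≤ a / (b * c) := by
    intro d
    rw [Ordinal.le_div hc, Ordinal.le_div hb, ← mul_assoc, ← Ordinal.le_div hbc]
  exact le_antisymm ((key _).1 le_rfl) ((key _).2 le_rfl)


-- ℕ-indexed piece lemma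
lemma emb_pieces (S : Set Ordinal.{0}) (i : Ordinal.{0} → ℕ)
    (hmono : ∀ a ∈ S, ∀ b ∈ S, a < b → i a ≤ i b)
    (γ : ℕ → Ordinal.{0}) (hp : ∀ d : ℕ, Emb {ξ | ξ ∈ S ∧ i ξ = d} (γ d))
    (μ : ℕ → Ordinal.{0}) (hμs : ∀ d, μ (d + 1) = μ d + γ d)
    (δ : Ordinal.{0}) (hδ : ∀ d, μ (d + 1) ≤ δ) : Emb S δ := by
  choose φ h1 h2 using hp
  have hμmono : Monotone μ := monotone_nat_of_le_succ fun n => by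
    rw [hμs]; exact le_self_add
  refine ⟨fun ξ => μ (i ξ) + φ (i ξ) ξ, ?_, ?_⟩
  · intro a ha b hb hab
    rcases lt_or_eq_of_le (hmono a ha b hb hab) with hlt | heq
    · calc μ (i a) + φ (i a) a < μ (i a) + γ (i a) :=
            (add_lt_add_iff_left _).2 (h2 _ _ ⟨ha, rfl⟩)
        _ = μ (i a + 1) := (hμs _).symm
        _ ≤ μ (i b) := hμmono hlt
        _ ≤ μ (i b) + φ (i b) b := le_self_add
    · show μ (i a) + φ (i a) a < μ (i b) + φ (i b) b
      rw [heq]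
      exact (add_lt_add_iff_left _).2 (h1 (i b) a ⟨ha, heq⟩ b ⟨hb, rfl⟩ hab)
  · intro a ha
    calc μ (i a) + φ (i a) a < μ (i a) + γ (i a) := (add_lt_add_iff_left _).2 (h2 _ _ ⟨ha, rfl⟩)
      _ = μ (i a + 1) := (hμs _).symm
      _ ≤ δ := hδ _

-- finite-index piece lemma
lemma emb_finpieces (S : Set Ordinal.{0}) (i : Ordinal.{0} → Ordinal.{0})
    (hmono : ∀ a ∈ S, ∀ b ∈ S, a < b → i a ≤ i b)
    (T : Finset Ordinal.{0}) (hT : ∀ a ∈ S, i a ∈ T)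
    (γ : Ordinal.{0}) (hp : ∀ u : Ordinal.{0}, Emb {ξ | ξ ∈ S ∧ i ξ = u} γ) :
    Emb S (γ * T.card) := by
  classical
  choose φ h1 h2 using hp
  set r : Ordinal.{0} → ℕ := fun u => (T.filter (fun z => z < u)).card with hr
  have hrmono : ∀ u ∈ T, ∀ u' ∈ T, u < u' → r u < r u' := by
    intro u hu u' hu' huu
    apply Finset.card_lt_card
    constructor
    · intro z hz
      simp only [Finset.mem_filter] at hz ⊢
      exact ⟨hz.1, hz.2.trans huu⟩
    · intro hsub
      have : u ∈ T.filter (fun z => z < u') := Finset.mem_filter.2 ⟨hu, huu⟩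
      have := hsub this
      simp only [Finset.mem_filter] at this
      exact absurd this.2 (lt_irrefl _)
  have hrlt : ∀ u ∈ T, r u < T.card := by
    intro u hu
    apply Finset.card_lt_card
    constructor
    · exact Finset.filter_subset _ _
    · intro hsub
      have := hsub hu
      simp only [Finset.mem_filter] at this
      exact absurd this.2 (lt_irrefl _)
  refine ⟨fun ξ => γ * (r (i ξ)) + φ (i ξ) ξ, ?_, ?_⟩
  · intro a ha b hb hab
    rcases lt_or_eq_of_le (hmono a ha b hb hab) with hlt | heq
    · have hra : r (i a) < r (i b) := hrmono _ (hT a ha) _ (hT b hb) hlt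
      calc γ * (r (i a)) + φ (i a) a < γ * (r (i a)) + γ :=
            (add_lt_add_iff_left _).2 (h2 _ _ ⟨ha, rfl⟩)
        _ = γ * ((r (i a) : Ordinal) + 1) := by rw [mul_add_one]
        _ ≤ γ * (r (i b)) := by
            apply mul_le_mul_right
            have : ((r (i a) + 1 : ℕ) : Ordinal.{0}) ≤ ((r (i b) : ℕ) : Ordinal.{0}) := by
              exact_mod_cast Nat.cast_le.2 hra
            simpa using this
        _ ≤ γ * (r (i b)) + φ (i b) b := le_self_add
    · show γ * (r (i a)) + φ (i a) a < γ * (r (i b)) + φ (i b) b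
      rw [heq]
      exact (add_lt_add_iff_left _).2 (h1 (i b) a ⟨ha, heq⟩ b ⟨hb, rfl⟩ hab)
  · intro a ha
    calc γ * (r (i a)) + φ (i a) a < γ * (r (i a)) + γ := (add_lt_add_iff_left _).2 (h2 _ _ ⟨ha, rfl⟩)
      _ = γ * ((r (i a) : Ordinal) + 1) := by rw [mul_add_one]
      _ ≤ γ * (T.card : Ordinal) := by
          apply mul_le_mul_right
          have : ((r (i a) + 1 : ℕ) : Ordinal.{0}) ≤ ((T.card : ℕ) : Ordinal.{0}) :=
            Nat.cast_le.2 (hrlt _ (hT a ha))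
          simpa using this

lemma Wne0 (n : ℕ) : (ω ^ n : Ordinal.{0}) ≠ 0 := by
  rw [← Ordinal.opow_natCast]
  exact (Ordinal.opow_pos _ omega0_pos).ne'

lemma Wle {i j : ℕ} (h : i ≤ j) : (ω ^ i : Ordinal.{0}) ≤ ω ^ j := by
  rw [← Ordinal.opow_natCast, ← Ordinal.opow_natCast]
  exact Ordinal.opow_le_opow_right omega0_pos (by exact_mod_cast h)

lemma Wlt {i j : ℕ} (h : i < j) : (ω ^ i : Ordinal.{0}) < ω ^ j := by
  rw [← Ordinal.opow_natCast, ← Ordinal.opow_natCast]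
  exact (Ordinal.opow_lt_opow_iff_right one_lt_omega0).2 (by exact_mod_cast h)

lemma idx_mono (S : Set Ordinal.{0}) (c : Ordinal.{0}) (hc : c ≠ 0) (v : Ordinal.{0})
    (hS : ∀ ξ ∈ S, ξ / (c * ω) = v) :
    (∀ ξ ∈ S, ξ / c = ω * v + (natOf (ξ / c % ω) : Ordinal.{0})) ∧
    (∀ a ∈ S, ∀ b ∈ S, a < b → natOf (a / c % ω) ≤ natOf (b / c % ω)) := by
  have heq : ∀ ξ ∈ S, ξ / c = ω * v + (natOf (ξ / c % ω) : Ordinal.{0}) := by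
    intro ξ hξ
    rw [cast_natOf (Ordinal.mod_lt _ omega0_ne_zero)]
    conv_lhs => rw [← Ordinal.div_add_mod (ξ / c) ω]
    rw [Ordinal.div_div' ξ hc omega0_ne_zero, hS ξ hξ]
  refine ⟨heq, fun a ha b hb hab => ?_⟩
  have h1 : ω * v + (natOf (a / c % ω) : Ordinal.{0})
      ≤ ω * v + (natOf (b / c % ω) : Ordinal.{0}) := by
    rw [← heq a ha, ← heq b hb]; exact Ordinal.div_le_left hab.le c
  have := (add_le_add_iff_left (ω * v)).1 h1
  exact_mod_cast this

lemma main_bound : ∀ (n : ℕ), 1 ≤ n → ∀ (s : ℕ) (S : Set Ordinal.{0}) (v : Ordinal.{0}),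
    (∀ ξ ∈ S, ξ / (ω ^ s * ω * ω ^ n) = v) →
    (∀ w : Ordinal.{0}, ((fun ξ => ξ / ω ^ s) '' {ξ | ξ ∈ S ∧ ξ / (ω ^ s * ω) = w}).Finite) →
    Emb S (ω ^ s * ω ^ n) := by
  intro n
  induction n with
  | zero => exact fun h => absurd h (by norm_num)
  | succ n IH =>
    intro _ s S v hS hcond
    by_cases hn : n = 0
    · -- base case : n + 1 = 1
      subst hn
      have hc0 : (ω ^ s * ω : Ordinal.{0}) ≠ 0 := _root_.mul_ne_zero (Wne0 s) omega0_ne_zero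
      have hS' : ∀ ξ ∈ S, ξ / (ω ^ s * ω * ω) = v := by
        intro ξ hξ
        have h1 : (ω ^ s * ω * ω ^ 1 : Ordinal.{0}) = ω ^ s * ω * ω := by rw [pow_one]
        rw [← h1]; exact hS ξ hξ
      obtain ⟨heq, hmon⟩ := idx_mono S (ω ^ s * ω) hc0 v hS'
      set idx : Ordinal.{0} → ℕ := fun ξ => natOf (ξ / (ω ^ s * ω) % ω) with hidx
      set Ncard : ℕ → ℕ :=
        fun d => (hcond (ω * v + (d : Ordinal.{0}))).toFinset.card with hNcard
      set Nsum : ℕ → ℕ := fun d => (Finset.range d).sum Ncard with hNsum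
      have hpiece : ∀ d : ℕ, Emb {ξ | ξ ∈ S ∧ idx ξ = d} (ω ^ s * (Ncard d)) := by
        intro d
        have hblock : ∀ ξ ∈ {ξ | ξ ∈ S ∧ idx ξ = d},
            ξ / (ω ^ s * ω) = ω * v + (d : Ordinal.{0}) := by
          rintro ξ ⟨hξS, hξd⟩
          rw [heq ξ hξS]
          exact congrArg (fun t : ℕ => ω * v + (t : Ordinal.{0})) hξd
        refine emb_finpieces _ (fun ξ => ξ / ω ^ s) ?_
          (hcond (ω * v + (d : Ordinal.{0}))).toFinset ?_ _ ?_
        · intro a _ b _ hab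
          exact Ordinal.div_le_left hab.le _
        · rintro a ⟨haS, had⟩
          rw [Set.Finite.mem_toFinset]
          exact ⟨a, ⟨haS, hblock a ⟨haS, had⟩⟩, rfl⟩
        · intro u
          refine Emb.mono ?_ le_rfl (emb_block (Wne0 s) u)
          rintro ξ ⟨_, hξu⟩
          exact hξu
      refine emb_pieces S idx hmon _ hpiece
        (fun d => ω ^ s * (Nsum d : Ordinal.{0})) ?_ _ ?_
      · intro d
        show ω ^ s * ((Nsum (d + 1) : ℕ) : Ordinal.{0}) =
          ω ^ s * ((Nsum d : ℕ) : Ordinal.{0}) + ω ^ s * ((Ncard d : ℕ) : Ordinal.{0})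
        have h2 : Nsum (d + 1) = Nsum d + Ncard d := Finset.sum_range_succ Ncard d
        rw [h2]
        push_cast
        rw [mul_add]
      · intro d
        show ω ^ s * ((Nsum (d + 1) : ℕ) : Ordinal.{0}) ≤ ω ^ s * ω ^ 1
        rw [pow_one]
        apply mul_le_mul_right
        exact (Ordinal.nat_lt_omega0 _).le
    · -- inductive step
      have hn1 : 1 ≤ n := Nat.one_le_iff_ne_zero.2 hn
      have hc0 : (ω ^ s * ω * ω ^ n : Ordinal.{0}) ≠ 0 :=
        _root_.mul_ne_zero (_root_.mul_ne_zero (Wne0 s) omega0_ne_zero) (Wne0 n)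
      have hS' : ∀ ξ ∈ S, ξ / (ω ^ s * ω * ω ^ n * ω) = v := by
        intro ξ hξ
        have h1 : (ω ^ s * ω * ω ^ (n + 1) : Ordinal.{0}) = ω ^ s * ω * ω ^ n * ω := by
          rw [pow_succ, ← mul_assoc]
        rw [← h1]; exact hS ξ hξ
      obtain ⟨heq, hmon⟩ := idx_mono S (ω ^ s * ω * ω ^ n) hc0 v hS'
      set idx : Ordinal.{0} → ℕ := fun ξ => natOf (ξ / (ω ^ s * ω * ω ^ n) % ω) with hidx
      have hpiece : ∀ d : ℕ, Emb {ξ | ξ ∈ S ∧ idx ξ = d} (ω ^ s * ω ^ n) := by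
        intro d
        refine IH hn1 s _ (ω * v + (d : Ordinal.{0})) ?_ ?_
        · rintro ξ ⟨hξS, hξd⟩
          rw [heq ξ hξS]
          exact congrArg (fun t : ℕ => ω * v + (t : Ordinal.{0})) hξd
        · intro w
          refine Set.Finite.subset (hcond w) ?_
          rintro u ⟨ξ, ⟨⟨hξS, _⟩, hξw⟩, rfl⟩
          exact ⟨ξ, ⟨hξS, hξw⟩, rfl⟩
      refine emb_pieces S idx hmon _ hpiece
        (fun d => ω ^ s * ω ^ n * (d : Ordinal.{0})) ?_ _ ?_
      · intro d
        show ω ^ s * ω ^ n * (((d + 1 : ℕ)) : Ordinal.{0}) =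
          ω ^ s * ω ^ n * ((d : ℕ) : Ordinal.{0}) + ω ^ s * ω ^ n
        push_cast
        rw [mul_add_one]
      · intro d
        show ω ^ s * ω ^ n * (((d + 1 : ℕ)) : Ordinal.{0}) ≤ ω ^ s * ω ^ (n + 1)
        have h1 : (ω ^ s * ω ^ (n + 1) : Ordinal.{0}) = ω ^ s * ω ^ n * ω := by
          rw [pow_succ, ← mul_assoc]
        rw [h1]
        apply mul_le_mul_right
        exact (Ordinal.nat_lt_omega0 _).le

lemma const_contra (m j : ℕ) (hj1 : 1 ≤ j) (hm : 1 ≤ m)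
    (S : Set Ordinal.{0}) (w : Ordinal.{0}) (hconst : ∀ ξ ∈ S, ξ / ω ^ (m - j) = w)
    (hge : Ordinal.lift.{1} (ω ^ m : Ordinal.{0}) ≤ otype S) : False := by
  have h1 : Emb S (ω ^ (m - j)) :=
    Emb.mono (fun ξ hξ => hconst ξ hξ) le_rfl (emb_block (Wne0 (m - j)) w)
  have h2 : otype S ≤ Ordinal.lift.{1} (ω ^ (m - j)) := h1.otype_le
  have h3 : (ω ^ (m - j) : Ordinal.{0}) < ω ^ m := Wlt (by omega)
  exact absurd (hge.trans h2) (not_le.2 (Ordinal.lift_lt.2 h3))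

lemma f2one_contra (m j : ℕ) (hj1 : 1 ≤ j) (hjm : j ≤ m - 1) (hm : 2 ≤ m)
    (S : Set Ordinal.{0}) (hbound : ∀ ξ ∈ S, ξ < ω ^ m)
    (hcond : ∀ w : Ordinal.{0},
      ((fun ξ => ξ / ω ^ (m - j - 1)) '' {ξ | ξ ∈ S ∧ ξ / ω ^ (m - j) = w}).Finite)
    (hge : Ordinal.lift.{1} (ω ^ m : Ordinal.{0}) ≤ otype S) : False := by
  set s : ℕ := m - j - 1 with hs
  have hsucc : (ω ^ s * ω : Ordinal.{0}) = ω ^ (m - j) := by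
    rw [← pow_succ]
    congr 1
    omega
  have hfull : (ω ^ s * ω * ω ^ j : Ordinal.{0}) = ω ^ m := by
    rw [hsucc, ← pow_add]
    congr 1
    omega
  have h1 : Emb S (ω ^ s * ω ^ j) := by
    refine main_bound j hj1 s S 0 ?_ ?_
    · intro ξ hξ
      rw [hfull]
      exact Ordinal.div_eq_zero_of_lt (hbound ξ hξ)
    · intro w
      rw [hsucc]
      exact hcond w
  have hm1 : (ω ^ s * ω ^ j : Ordinal.{0}) = ω ^ (m - 1) := by
    rw [← pow_add]
    congr 1
    omega
  rw [hm1] at h1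
  have h2 : otype S ≤ Ordinal.lift.{1} (ω ^ (m - 1)) := h1.otype_le
  have h3 : (ω ^ (m - 1) : Ordinal.{0}) < ω ^ m := Wlt (by omega)
  exact absurd (hge.trans h2) (not_le.2 (Ordinal.lift_lt.2 h3))

lemma cardW_le (n : ℕ) : Ordinal.card (ω ^ n : Ordinal.{0}) ≤ Cardinal.aleph0 := by
  induction n with
  | zero => simp [pow_zero]
  | succ n IH =>
    rw [pow_succ, Ordinal.card_mul, Ordinal.card_omega0]
    calc (ω ^ n : Ordinal.{0}).card * Cardinal.aleph0
        ≤ Cardinal.aleph0 * Cardinal.aleph0 := by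
          exact mul_le_mul' IH le_rfl
      _ = Cardinal.aleph0 := Cardinal.aleph0_mul_aleph0

lemma exists_encoding (m : ℕ) : ∃ (E : Ordinal.{0} → ℕ) (D : ℕ → Ordinal.{0}),
    (∀ o : Ordinal.{0}, o < ω ^ m → D (E o) = o) := by
  have hcnt : Countable ↥(Iio (ω ^ m : Ordinal.{0})) := by
    rw [← Cardinal.mk_le_aleph0_iff]
    rw [Ordinal.mk_Iio_ordinal]
    calc Cardinal.lift.{1} (ω ^ m : Ordinal.{0}).card
        ≤ Cardinal.lift.{1} Cardinal.aleph0 := Cardinal.lift_le.2 (cardW_le m)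
      _ = Cardinal.aleph0 := Cardinal.lift_aleph0
  obtain ⟨enc, henc⟩ := Countable.exists_injective_nat ↥(Iio (ω ^ m : Ordinal.{0}))
  classical
  set E : Ordinal.{0} → ℕ := fun o => if h : o < ω ^ m then enc ⟨o, h⟩ else 0 with hE
  have hEinj : ∀ o₁ : Ordinal.{0}, o₁ < ω ^ m → ∀ o₂ : Ordinal.{0}, o₂ < ω ^ m →
      E o₁ = E o₂ → o₁ = o₂ := by
    intro o₁ h₁ o₂ h₂ h
    rw [hE] at h
    simp only [dif_pos h₁, dif_pos h₂] at h
    exact congrArg Subtype.val (henc h)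
  refine ⟨E, fun n => if h : ∃ o' : Ordinal.{0}, o' < ω ^ m ∧ E o' = n then h.choose
    else 0, ?_⟩
  intro o ho
  have hex : ∃ o' : Ordinal.{0}, o' < ω ^ m ∧ E o' = E o := ⟨o, ho, rfl⟩
  simp only [dif_pos hex]
  exact hEinj _ hex.choose_spec.1 _ ho hex.choose_spec.2

lemma liftW (n : ℕ) :
    Ordinal.lift.{1} ((ω : Ordinal.{0}) ^ n) = (ω : Ordinal.{1}) ^ n := by
  induction n with
  | zero => simp [pow_zero]
  | succ n IH => rw [pow_succ, Ordinal.lift_mul, IH, Ordinal.lift_omega0, pow_succ]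


lemma setup (U : Ultrafilter ℕ) (k : ℕ) (hk : 2 ≤ k)
    (hU : IsStrictAlphaUF U (ω ^ (ω : Ordinal.{1}))) :
    ∃ (m : ℕ) (p : ℕ → Ordinal.{0}) (X₁ : Set ℕ), k ≤ m ∧ X₁ ∈ U ∧
      (∀ x, p x < ω ^ m) ∧
      (∀ X ∈ U, Ordinal.lift.{1} ((ω : Ordinal.{0}) ^ m) ≤ otype (p '' (X ∩ X₁))) := by
  classical
  -- step 1 : get h with all otypes ≥ ω^k
  have hnot : ¬(∀ h : ℕ → Ordinal.{0}, (∀ n, h n < ω₁) →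
      ∃ X ∈ U, otype (h '' X) < (ω : Ordinal.{1}) ^ k) := by
    intro hmem
    have h1 : (ω : Ordinal.{1}) ^ (ω : Ordinal.{1}) ≤ (ω : Ordinal.{1}) ^ k := hU.2 hmem
    have h2 : ((ω : Ordinal.{1}) ^ k : Ordinal.{1}) < ω ^ (ω : Ordinal.{1}) := by
      rw [← Ordinal.opow_natCast]
      exact (Ordinal.opow_lt_opow_iff_right one_lt_omega0).2 (Ordinal.nat_lt_omega0 k)
    exact absurd h1 (not_le.2 h2)
  push_neg at hnot
  obtain ⟨h, hh1, hh2⟩ := hnot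
  -- step 2 : minimize
  set B : Set Ordinal.{1} := {o | ∃ X, X ∈ U ∧ otype (h '' X) = o} with hB
  have hBne : B.Nonempty := ⟨otype (h '' univ), univ, Filter.univ_mem, rfl⟩
  obtain ⟨Xβ, hXβ, hXβeq⟩ := csInf_mem hBne
  set β : Ordinal.{1} := sInf B with hβdef
  have hβle : ∀ X ∈ U, β ≤ otype (h '' X) := fun X hX => csInf_le' ⟨X, hX, rfl⟩
  have hβk : (ω : Ordinal.{1}) ^ k ≤ β := hXβeq ▸ hh2 Xβ hXβ
  -- step 3 : descend to a small ordinal b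
  obtain ⟨X₀, hX₀, hX₀lt⟩ := hU.1 h hh1
  have hβlt : β < (ω : Ordinal.{1}) ^ (ω : Ordinal.{1}) := (hβle X₀ hX₀).trans_lt hX₀lt
  obtain ⟨N, hβN⟩ : ∃ N : ℕ, β < (ω : Ordinal.{1}) ^ N := by
    obtain ⟨c', hc', hβc'⟩ :=
      (Ordinal.lt_opow_of_isSuccLimit omega0_ne_zero isSuccLimit_omega0).1 hβlt
    obtain ⟨N, rfl⟩ := Ordinal.lt_omega0.1 hc'
    exact ⟨N, by rwa [Ordinal.opow_natCast] at hβc'⟩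
  have hβN' : β < Ordinal.lift.{1} ((ω : Ordinal.{0}) ^ N) := by rw [liftW]; exact hβN
  obtain ⟨b, hb⟩ := Ordinal.mem_range_lift_of_le hβN'.le
  have hbN : b < (ω : Ordinal.{0}) ^ N := Ordinal.lift_lt.1 (by rw [hb]; exact hβN')
  have hbk : (ω : Ordinal.{0}) ^ k ≤ b := by
    have : Ordinal.lift.{1} ((ω : Ordinal.{0}) ^ k) ≤ Ordinal.lift.{1} b := by
      rw [hb, liftW]; exact hβk
    exact Ordinal.lift_le.1 this
  -- step 4 : choose m
  set m : ℕ := Nat.findGreatest (fun i => (ω : Ordinal.{0}) ^ i ≤ b) N with hmdef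
  have hkN : k < N := by
    by_contra hcon
    exact absurd (Wle (not_lt.1 hcon)) (not_le.2 (lt_of_le_of_lt hbk hbN))
  have hm : (ω : Ordinal.{0}) ^ m ≤ b :=
    Nat.findGreatest_spec (P := fun i => (ω : Ordinal.{0}) ^ i ≤ b) hkN.le hbk
  have hkm : k ≤ m := Nat.le_findGreatest (P := fun i => (ω : Ordinal.{0}) ^ i ≤ b) hkN.le hbk
  have hmN : m ≤ N := Nat.findGreatest_le (P := fun i => (ω : Ordinal.{0}) ^ i ≤ b) N
  have hbm : b < (ω : Ordinal.{0}) ^ (m + 1) := by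
    by_cases hcase : m + 1 ≤ N
    · have := Nat.findGreatest_is_greatest (P := fun i => (ω : Ordinal.{0}) ^ i ≤ b)
        (Nat.lt_succ_self m) hcase
      exact not_le.1 this
    · exact lt_of_lt_of_le hbN (Wle (by omega))
  -- step 5 : positions
  set A : Set Ordinal.{0} := h '' Xβ with hA
  set Seg : ℕ → Set Ordinal.{0} := fun x => {a | a ∈ A ∧ a < h x} with hSeg
  have hseg_le : ∀ x, otype (Seg x) ≤ Ordinal.lift.{1} b := by
    intro x
    have h1 : otype (Seg x) ≤ otype A :=
      otype_le_of_map _ _ id (fun a ha => ha.1) (fun a _ b _ hab => hab)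
    rw [hb]
    exact h1.trans_eq hXβeq
  set q : ℕ → Ordinal.{0} := fun x => (Set.mem_range.1 (Ordinal.mem_range_lift_of_le (hseg_le x))).choose with hqdef
  have hq : ∀ x, Ordinal.lift.{1} (q x) = otype (Seg x) :=
    fun x => (Set.mem_range.1 (Ordinal.mem_range_lift_of_le (hseg_le x))).choose_spec
  have hqmono : ∀ x ∈ Xβ, ∀ y ∈ Xβ, h x < h y → q x < q y := by
    intro x hx y hy hxy
    have hset : Seg x = {a | a ∈ Seg y ∧ a < h x} := by
      ext a
      constructor
      · rintro ⟨haA, halt⟩; exact ⟨⟨haA, halt.trans hxy⟩, halt⟩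
      · rintro ⟨⟨haA, _⟩, halt⟩; exact ⟨haA, halt⟩
    have : otype (Seg x) < otype (Seg y) := by
      rw [hset]
      exact otype_inter_Iio_lt ⟨mem_image_of_mem h hx, hxy⟩
    rw [← hq x, ← hq y] at this
    exact Ordinal.lift_lt.1 this
  have hqiff : ∀ x ∈ Xβ, ∀ y ∈ Xβ, (q x < q y ↔ h x < h y) := by
    intro x hx y hy
    constructor
    · intro hlt
      rcases lt_trichotomy (h x) (h y) with hc | hc | hc
      · exact hc
      · have : q x = q y := by
          have : Seg x = Seg y := by rw [hSeg]; simp only [hc]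
          have h2 : Ordinal.lift.{1} (q x) = Ordinal.lift.{1} (q y) := by
            rw [hq x, hq y, this]
          exact Ordinal.lift_inj.1 h2
        exact absurd (this ▸ hlt) (lt_irrefl _)
      · exact absurd (hlt.trans (hqmono y hy x hx hc)) (lt_irrefl _)
    · exact hqmono x hx y hy
  have hqlt : ∀ x ∈ Xβ, q x < b := by
    intro x hx
    have h1 : otype (Seg x) < otype A := otype_inter_Iio_lt (mem_image_of_mem h hx)
    rw [← hq x] at h1
    have h2 : otype A = Ordinal.lift.{1} b := by rw [hb]; exact hXβeq
    rw [h2] at h1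
    exact Ordinal.lift_lt.1 h1
  -- step 6 : pigeonhole on the ω^m-block
  set tfun : ℕ → ℕ := fun x => natOf (q x / (ω : Ordinal.{0}) ^ m) with htfun
  set c₀ : ℕ := natOf (b / (ω : Ordinal.{0}) ^ m) with hc₀
  have hbdivlt : b / (ω : Ordinal.{0}) ^ m < ω := by
    rw [Ordinal.div_lt (Wne0 m), ← pow_succ]
    exact hbm
  have htle : ∀ x ∈ Xβ, tfun x ≤ c₀ := by
    intro x hx
    have h1 : q x / (ω : Ordinal.{0}) ^ m ≤ b / (ω : Ordinal.{0}) ^ m :=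
      Ordinal.div_le_left (hqlt x hx).le _
    have h2 : q x / (ω : Ordinal.{0}) ^ m < ω := lt_of_le_of_lt h1 hbdivlt
    have h3 : ((tfun x : ℕ) : Ordinal.{0}) ≤ ((c₀ : ℕ) : Ordinal.{0}) := by
      rw [htfun, hc₀]
      simp only []
      rw [cast_natOf h2, cast_natOf hbdivlt]
      exact h1
    exact_mod_cast h3
  have hcover : Xβ ⊆ ⋃ e ∈ (↑(Finset.range (c₀ + 1)) : Set ℕ), {x ∈ Xβ | tfun x = e} := by
    intro x hx
    refine mem_biUnion ?_ ⟨hx, rfl⟩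
    simp only [Finset.coe_range, mem_Iio]
    have := htle x hx
    omega
  have hcover' : (⋃ e ∈ (↑(Finset.range (c₀ + 1)) : Set ℕ), {x ∈ Xβ | tfun x = e}) ∈ U :=
    Filter.mem_of_superset hXβ hcover
  obtain ⟨d, _, hX₁⟩ :=
    (Ultrafilter.finite_biUnion_mem_iff (Finset.finite_toSet _)).1 hcover'
  set X₁ : Set ℕ := {x ∈ Xβ | tfun x = d} with hX₁def
  -- step 7 : final p
  set p : ℕ → Ordinal.{0} := fun x => q x % (ω : Ordinal.{0}) ^ m with hpdef
  have hplt : ∀ x, p x < (ω : Ordinal.{0}) ^ m := fun x => Ordinal.mod_lt _ (Wne0 m)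
  have hqdecomp : ∀ x ∈ X₁, q x = (ω : Ordinal.{0}) ^ m * (d : Ordinal.{0}) + p x := by
    rintro x ⟨hxβ, hxd⟩
    have h2 : q x / (ω : Ordinal.{0}) ^ m < ω := by
      exact lt_of_le_of_lt (Ordinal.div_le_left (hqlt x hxβ).le _) hbdivlt
    have h3 : ((d : ℕ) : Ordinal.{0}) = q x / (ω : Ordinal.{0}) ^ m := by
      rw [← hxd]
      exact cast_natOf h2
    rw [h3]
    exact (Ordinal.div_add_mod _ _).symm
  have hpiff : ∀ x ∈ X₁, ∀ y ∈ X₁, (p x < p y ↔ q x < q y) := by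
    intro x hx y hy
    rw [hqdecomp x hx, hqdecomp y hy]
    exact (add_lt_add_iff_left _).symm
  have hX₁sub : X₁ ⊆ Xβ := fun x hx => hx.1
  refine ⟨m, p, X₁, hkm, hX₁, hplt, ?_⟩
  intro X hX
  have hXX₁ : X ∩ X₁ ∈ U := Filter.inter_mem hX hX₁
  have e1 : otype (p '' (X ∩ X₁)) = otype (q '' (X ∩ X₁)) :=
    otype_image_eq _ _ _ (fun x hx y hy => hpiff x hx.2 y hy.2)
  have e2 : otype (q '' (X ∩ X₁)) = otype (h '' (X ∩ X₁)) :=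
    otype_image_eq _ _ _ (fun x hx y hy => hqiff x (hX₁sub hx.2) y (hX₁sub hy.2))
  have e3 : β ≤ otype (h '' (X ∩ X₁)) := hβle _ hXX₁
  have e4 : Ordinal.lift.{1} ((ω : Ordinal.{0}) ^ m) ≤ β := by
    rw [← hb]
    exact Ordinal.lift_le.2 hm
  rw [e1, e2]
  exact e4.trans e3

/-- If `U` is a strict `ω ^ ω`-ultrafilter, then for every `k` there is a `<_∞`-chain
of length `k` below `U`. -/
theorem stmt6 (U : Ultrafilter ℕ) (hU : IsStrictAlphaUF U (ω ^ (ω : Ordinal.{1}))) :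
    ∀ k : ℕ, ChainBelow U k := by
  intro k
  by_cases hk2 : k < 2
  · exact ⟨fun _ => U, Or.inl rfl, fun i hi => absurd hi (by omega)⟩
  push_neg at hk2
  obtain ⟨m, p, X₁, hkm, hX₁, hplt, hmain⟩ := setup U k hk2 hU
  obtain ⟨E, D, hDE⟩ := exists_encoding m
  classical
  set g : ℕ → ℕ → ℕ := fun j x => E (p x / (ω : Ordinal.{0}) ^ (m - j)) with hg
  set π : ℕ → ℕ := fun n => E (D n / ω) with hπ
  have hm2 : 2 ≤ m := le_trans hk2 hkm
  have hpref : ∀ t (x : ℕ), t ≤ m → p x / (ω : Ordinal.{0}) ^ (m - t) < ω ^ m := by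
    intro t x ht
    have h1 : p x / (ω : Ordinal.{0}) ^ (m - t) < ω ^ t := by
      rw [Ordinal.div_lt (Wne0 _), ← pow_add]
      exact lt_of_lt_of_le (hplt x) (Wle (by omega))
    exact lt_of_lt_of_le h1 (Wle ht)
  have hcomp : ∀ j, j + 1 ≤ m → π ∘ (g (j + 1)) = g j := by
    intro j hj
    funext x
    show E (D (E (p x / ω ^ (m - (j + 1)))) / ω) = E (p x / ω ^ (m - j))
    rw [hDE _ (hpref (j + 1) x hj)]
    congr 1
    rw [Ordinal.div_div' _ (Wne0 (m - (j + 1))) omega0_ne_zero, ← pow_succ]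
    have hexp : m - (j + 1) + 1 = m - j := by omega
    rw [hexp]
  have HCONST : ∀ X ∈ U, ∀ j : ℕ, 1 ≤ j → ∀ w : Ordinal.{0},
      (∀ x ∈ X ∩ X₁, p x / (ω : Ordinal.{0}) ^ (m - j) = w) → False := by
    intro X hX j hj w hw
    refine const_contra m j hj (by omega) (p '' (X ∩ X₁)) w ?_ (hmain X hX)
    rintro ξ ⟨x, hx, rfl⟩
    exact hw x hx
  have HF2 : ∀ X ∈ U, ∀ j : ℕ, 1 ≤ j → j ≤ m - 1 →
      (∀ w : Ordinal.{0},
        ((fun ξ => ξ / (ω : Ordinal.{0}) ^ (m - j - 1)) ''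
          {ξ | ξ ∈ p '' (X ∩ X₁) ∧ ξ / (ω : Ordinal.{0}) ^ (m - j) = w}).Finite) →
      False := by
    intro X hX j hj hjm hcond
    refine f2one_contra m j hj hjm hm2 (p '' (X ∩ X₁)) ?_ hcond (hmain X hX)
    rintro ξ ⟨x, _, rfl⟩
    exact hplt x
  -- conditions for the first step
  have hsite1 : ∀ X ∈ U, ¬ FinToOneOn (g (k - 1)) X ∧ ¬ ConstOn (g (k - 1)) X := by
    intro X hX
    constructor
    · intro hf
      refine HF2 X hX (m - 1) (by omega) (by omega) ?_
      intro w
      rw [show m - (m - 1) - 1 = 0 from by omega, show m - (m - 1) = 1 from by omega]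
      set n₀ : ℕ := E (w / (ω : Ordinal.{0}) ^ (m - k)) with hn₀
      have hsub : {ξ | ξ ∈ p '' (X ∩ X₁) ∧ ξ / (ω : Ordinal.{0}) ^ 1 = w} ⊆
          p '' (X ∩ (g (k - 1)) ⁻¹' {n₀}) := by
        rintro ξ ⟨⟨x, hx, rfl⟩, hξw⟩
        refine ⟨x, ⟨hx.1, ?_⟩, rfl⟩
        show g (k - 1) x ∈ ({n₀} : Set ℕ)
        rw [mem_singleton_iff]
        show E (p x / ω ^ (m - (k - 1))) = n₀
        rw [pow_one] at hξw
        have h1 : p x / (ω : Ordinal.{0}) ^ (m - (k - 1)) =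
            (p x / ω) / (ω : Ordinal.{0}) ^ (m - k) := by
          rw [Ordinal.div_div' _ omega0_ne_zero (Wne0 _)]
          have h2 : (ω : Ordinal.{0}) * ω ^ (m - k) = ω ^ (m - (k - 1)) := by
            rw [← pow_succ']
            have : m - k + 1 = m - (k - 1) := by omega
            rw [this]
          rw [h2]
        rw [h1, hξw]
      exact Set.Finite.image _ (Set.Finite.subset (Set.Finite.image p (hf n₀)) hsub)
    · rintro ⟨c, hc⟩
      refine HCONST X hX (k - 1) (by omega) (D c) ?_
      intro x hx
      have h1 : g (k - 1) x = c := hc x hx.1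
      have h2 : D (g (k - 1) x) = p x / ω ^ (m - (k - 1)) :=
        hDE _ (hpref (k - 1) x (by omega))
      rw [h1] at h2
      exact h2.symm
  -- conditions for the later steps
  have hsite2 : ∀ j : ℕ, 1 ≤ j → j + 1 ≤ m → ∀ Y ∈ Ultrafilter.map (g (j + 1)) U,
      ¬ FinToOneOn π Y ∧ ¬ ConstOn π Y := by
    intro j hj hjm Y hY
    have hXmem : (g (j + 1)) ⁻¹' Y ∈ U := (Ultrafilter.mem_map).1 hY
    have hcompj := hcomp j hjm
    constructor
    · intro hf
      refine HF2 _ hXmem j hj (by omega) ?_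
      intro w
      have hsub : (fun ξ => ξ / (ω : Ordinal.{0}) ^ (m - j - 1)) ''
          {ξ | ξ ∈ p '' ((g (j + 1)) ⁻¹' Y ∩ X₁) ∧ ξ / (ω : Ordinal.{0}) ^ (m - j) = w} ⊆
          D '' (Y ∩ π ⁻¹' {E w}) := by
        rintro u ⟨ξ, ⟨⟨x, hx, rfl⟩, hξw⟩, rfl⟩
        refine ⟨g (j + 1) x, ⟨hx.1, ?_⟩, ?_⟩
        · show g (j + 1) x ∈ π ⁻¹' {E w}
          rw [mem_preimage, mem_singleton_iff]
          have h1 : π (g (j + 1) x) = g j x := congrFun hcompj x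
          rw [h1]
          show E (p x / ω ^ (m - j)) = E w
          rw [hξw]
        · show D (g (j + 1) x) = p x / ω ^ (m - j - 1)
          have h1 : D (E (p x / ω ^ (m - (j + 1)))) = p x / ω ^ (m - (j + 1)) :=
            hDE _ (hpref (j + 1) x hjm)
          exact h1
      exact Set.Finite.subset (Set.Finite.image D (hf (E w))) hsub
    · rintro ⟨c, hc⟩
      refine HCONST _ hXmem j hj (D c) ?_
      intro x hx
      have h1 : π (g (j + 1) x) = c := hc _ hx.1
      have h2 : π (g (j + 1) x) = g j x := congrFun hcompj x
      have h3 : g j x = c := by rw [← h2, h1]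
      have h4 : D (g j x) = p x / ω ^ (m - j) := hDE _ (hpref j x (by omega))
      rw [h3] at h4
      exact h4.symm
  -- assemble the chain
  refine ⟨fun i => if i = 0 then U else Ultrafilter.map (g (k - i)) U,
    Or.inl (if_pos rfl), ?_⟩
  intro i hik
  by_cases hi : i = 0
  · subst hi
    simp only [if_pos rfl, if_neg one_ne_zero]
    exact ⟨g (k - 1), rfl, fun X hX => hsite1 X hX⟩
  · simp only [if_neg hi, if_neg (show ¬ i + 1 = 0 from by omega)]
    have hki : k - i = (k - i - 1) + 1 := by omega
    have hj1 : 1 ≤ k - i - 1 := by omega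
    have hjm : (k - i - 1) + 1 ≤ m := by omega
    refine ⟨π, ?_, ?_⟩
    · rw [hki, Ultrafilter.map_map, hcomp (k - i - 1) hjm]
      have : k - (i + 1) = k - i - 1 := by omega
      rw [this]
    · intro Y hY
      rw [hki] at hY
      exact hsite2 (k - i - 1) hj1 hjm Y hY
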